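/- Let J be a symmetric positive definite d×d real matrix and A be a d×r real matrix with orthonormal columns (A^T A = I_r). Then (A^T J A)^{-1} ⪯ A^T J^{-1} A in the Loewner order, i.e., A^T J^{-1} A - (A^T J A)^{-1} is positive semidefinite. -/

import Mathlib

/-!
Put `K = Aᴴ J A`, `G = Aᴴ A` and `B = J⁻¹ A - A K⁻¹ G`. Expanding, and using `J J⁻¹ = 1` and
`K⁻¹ K K⁻¹ = K⁻¹`, gives `Bᴴ J B = Aᴴ J⁻¹ A - G K⁻¹ G`, so this difference is positive
semidefinite. For orthonormal columns `G = 1`.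
-/

open Matrix
open scoped ComplexOrder

namespace Matrix

variable {m n : Type*} [Fintype m] [Fintype n] [DecidableEq n]

theorem nonsing_inv_mul_mul_nonsing_inv {α : Type*} [CommRing α] (K : Matrix n n α) :
    K⁻¹ * K * K⁻¹ = K⁻¹ := by
  by_cases h : IsUnit K.det
  · rw [nonsing_inv_mul K h, Matrix.one_mul]
  · simp [nonsing_inv_apply_not_isUnit K h]

theorem PosDef.posSemidef_conjTranspose_inv_mul_sub {𝕜 : Type*} [RCLike 𝕜] [DecidableEq m]
    {J : Matrix n n 𝕜} (hJ : J.PosDef) (A : Matrix n m 𝕜) :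
    (Aᴴ * J⁻¹ * A - Aᴴ * A * (Aᴴ * J * A)⁻¹ * (Aᴴ * A)).PosSemidef := by
  set K := Aᴴ * J * A
  have hK : Kᴴ = K := by simp [K, hJ.isHermitian.eq, Matrix.mul_assoc]
  have hJ_det : IsUnit J.det := (isUnit_iff_isUnit_det J).mp hJ.isUnit
  set B := J⁻¹ * A - A * (K⁻¹ * (Aᴴ * A))
  have hB : Bᴴ * J * B = Aᴴ * J⁻¹ * A - Aᴴ * A * K⁻¹ * (Aᴴ * A) := by
    simp only [B, conjTranspose_sub, conjTranspose_mul, conjTranspose_nonsing_inv, hK,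
      hJ.isHermitian.eq, conjTranspose_conjTranspose]
    have hKK : ∀ Y : Matrix m m 𝕜, K⁻¹ * (Aᴴ * (J * (A * (K⁻¹ * Y)))) = K⁻¹ * Y := fun Y ↦ by
      simpa only [K, Matrix.mul_assoc] using congrArg (· * Y) (nonsing_inv_mul_mul_nonsing_inv K)
    simp only [Matrix.sub_mul, Matrix.mul_sub, Matrix.mul_assoc, hKK,
      mul_nonsing_inv_cancel_left _ _ hJ_det, nonsing_inv_mul_cancel_left _ _ hJ_det]
    abel
  exact hB ▸ hJ.posSemidef.conjTranspose_mul_mul_same B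

end Matrix

/-- Loewner order inequality `(Aᵀ J A)⁻¹ ⪯ Aᵀ J⁻¹ A` for `J` symmetric positive definite
and `A` with orthonormal columns. -/
theorem stmt1 {d r : ℕ} (J : Matrix (Fin d) (Fin d) ℝ) (hJ : J.PosDef)
    (A : Matrix (Fin d) (Fin r) ℝ) (hA : Aᵀ * A = 1) :
    (Aᵀ * J⁻¹ * A - (Aᵀ * J * A)⁻¹).PosSemidef := by
  simpa only [conjTranspose_eq_transpose_of_trivial, hA, Matrix.one_mul, Matrix.mul_one] using
    hJ.posSemidef_conjTranspose_inv_mul_sub A
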